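/- Let F be a multigraph with t vertices, let k ≥ 1 be an integer, and let H = F^{2k-1}. Let K, δ > 0 and let G be a graph with maximum degree at most Kδ that does not contain H as a subgraph. Let r = R_k(t) be the k-colour Ramsey number of t. Then for every vertex v of G, the auxiliary graph 𝒢(v) (with richness parameters k, h = |V(H)|, K, δ) contains no clique on r vertices. -/

import Mathlib

/-!
Colour each edge of a clique of `𝒢(v)` by a level `ℓ` at which its two tuples are adjacent.
Ramsey's theorem gives `t` tuples that are pairwise adjacent at one level `ℓ`; their `ℓ`-th
vertices are `t` distinct vertices of `G`, any two of which form a rich pair.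

A rich pair `(x, y)` can be joined by a path of length `2k` whose interior avoids any given set
`U` of at most `h = |V(H)|` vertices. Richness provides more pairs of short arms `P` from `x`,
`Q` from `y` than there are pairs in which an arm meets `U` or the arms meet each other (these
are counted with the maximum degree bound), and the ends of a good pair of arms are joined by
more internally disjoint paths than `U ∪ P ∪ Q` can block.

Embedding the subdivided edges of `F` one at a time, each avoiding the branch vertices and the
paths already embedded, then yields a copy of `H = F^{2k-1}` in `G`.
-/

open SimpleGraph

variable {V : Type*} [Fintype V] [DecidableEq V]

/-- The restriction of `p : ℕ → V` to `[0, ℓ]` is a path in `G`: consecutive vertices are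
adjacent and all vertices `p 0, …, p ℓ` are distinct. -/
def PathSeq (G : SimpleGraph V) (ℓ : ℕ) (p : ℕ → V) : Prop :=
  (∀ i, i < ℓ → G.Adj (p i) (p (i + 1))) ∧
  ∀ i j, i < j → j ≤ ℓ → p i ≠ p j

/-- `p` is padded beyond index `ℓ`; used so that each finite sequence corresponds to a
unique function `ℕ → V` when counting. -/
def PadSeq (ℓ : ℕ) (p : ℕ → V) : Prop := ∀ i, ℓ ≤ i → p i = p ℓ

/-- `f(ℓ, L) = L^(5^ℓ)`. -/
noncomputable def fBound (ℓ : ℕ) (L : ℝ) : ℝ := L ^ (5 ^ ℓ)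

/-- The recursive notion of an `L`-good path of length `ℓ` (as a sequence `p 0, …, p ℓ`):
`p` is a path, every proper subpath is `L`-good, and the number of `L`-admissible paths of
length `ℓ` from `p 0` to `p ℓ` is at most `f(ℓ, L)`. -/
def Good (G : SimpleGraph V) (L : ℝ) (ℓ : ℕ) (p : ℕ → V) : Prop :=
  (PathSeq G ℓ p ∧
    ∀ i j, i < j → j ≤ ℓ → ¬(i = 0 ∧ j = ℓ) → Good G L (j - i) (fun a => p (i + a))) ∧
  (Set.ncard {q : ℕ → V | q 0 = p 0 ∧ q ℓ = p ℓ ∧ PadSeq ℓ q ∧ PathSeq G ℓ q ∧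
      ∀ i j, i < j → j ≤ ℓ → ¬(i = 0 ∧ j = ℓ) → Good G L (j - i) (fun a => q (i + a))} : ℝ)
    ≤ fBound ℓ L
termination_by ℓ
decreasing_by all_goals omega

/-- `L`-admissible: a path all of whose proper subpaths are `L`-good. -/
def Admissible (G : SimpleGraph V) (L : ℝ) (ℓ : ℕ) (p : ℕ → V) : Prop :=
  PathSeq G ℓ p ∧
    ∀ i j, i < j → j ≤ ℓ → ¬(i = 0 ∧ j = ℓ) → Good G L (j - i) (fun a => p (i + a))

/-- There exist `N` pairwise internally vertex-disjoint paths of length `m` from `x` to `y`. -/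
def ManyDisjointPaths (G : SimpleGraph V) (m : ℕ) (x y : V) (N : ℕ) : Prop :=
  ∃ P : Fin N → (ℕ → V),
    (∀ a, PathSeq G m (P a) ∧ P a 0 = x ∧ P a m = y) ∧
    (∀ a b, a ≠ b → ∃ i, i ≤ m ∧ P a i ≠ P b i) ∧
    ∀ a b, a ≠ b → ∀ i j, 0 < i → i < m → 0 < j → j < m → P a i ≠ P b j

/-- A pair `(x, y)` of distinct vertices is `(i,j)`-rich (with parameters `k`, `h`, `K`, `δ`). -/
def Rich (G : SimpleGraph V) (k h : ℕ) (K δ : ℝ) (i j : ℕ) (x y : V) : Prop :=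
  x ≠ y ∧
  ((2 * (i + j) * h * (2 * k + 1) + 2 * (i + 1) * j : ℕ) : ℝ) *
      (K * δ) ^ ((i : ℤ) + (j : ℤ) - 1) <
    (Set.ncard {PQ : (ℕ → V) × (ℕ → V) |
      PathSeq G i PQ.1 ∧ PQ.1 0 = x ∧ PadSeq i PQ.1 ∧
      PathSeq G j PQ.2 ∧ PQ.2 0 = y ∧ PadSeq j PQ.2 ∧
      ManyDisjointPaths G (2 * k - i - j) (PQ.1 i) (PQ.2 j) ((h + 2) * (2 * k + 1) + 1)} : ℝ)

/-- `(x, y)` is an `(ℓ, L)`-bad pair: there is an `L`-admissible but not `L`-good path of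
length `ℓ` from `x` to `y`. -/
def Bad (G : SimpleGraph V) (L : ℝ) (ℓ : ℕ) (x y : V) : Prop :=
  ∃ p : ℕ → V, p 0 = x ∧ p ℓ = y ∧ Admissible G L ℓ p ∧ ¬ Good G L ℓ p

/-- `G` contains the `(s-1)`-subdivision of the multigraph on `Fin t` with multiplicity
function `m` as a subgraph: each parallel edge between `a < b` is replaced by a path of
length `s`, these paths being pairwise internally vertex-disjoint, with internal vertices
distinct from all branch vertices. -/
def ContainsMultiSubdiv (G : SimpleGraph V) (t : ℕ) (m : Fin t → Fin t → ℕ) (s : ℕ) : Prop :=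
  ∃ (φ : Fin t → V) (π : (a : Fin t) → (b : Fin t) → Fin (m a b) → (ℕ → V)),
    Function.Injective φ ∧
    (∀ a b, a < b → ∀ c, PathSeq G s (π a b c) ∧ π a b c 0 = φ a ∧ π a b c s = φ b) ∧
    (∀ a b, a < b → ∀ c, ∀ i, 0 < i → i < s → ∀ d, π a b c i ≠ φ d) ∧
    (∀ a b, a < b → ∀ a' b', a' < b' → ∀ (c : Fin (m a b)) (c' : Fin (m a' b')),
      (a, b, (c : ℕ)) ≠ (a', b', (c' : ℕ)) →
      ∀ i i', 0 < i → i < s → 0 < i' → i' < s → π a b c i ≠ π a' b' c' i')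

/-- The number of vertices of `H = F^{2k-1}` where `F` is the multigraph on `Fin t` with
multiplicity function `m`: the `t` branch vertices plus `2k - 1` internal vertices for each
edge (counted with multiplicity). -/
def nH (t k : ℕ) (m : Fin t → Fin t → ℕ) : ℕ :=
  t + (2 * k - 1) * ∑ p : Fin t × Fin t, if p.1 < p.2 then m p.1 p.2 else 0

/-- The minimum degree of `G`. -/
noncomputable def minDeg (G : SimpleGraph V) : ℕ :=
  sInf {d | ∃ v, (G.neighborSet v).ncard = d}

/-- The maximum degree of `G`. -/
noncomputable def maxDeg (G : SimpleGraph V) : ℕ :=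
  sSup {d | ∃ v, (G.neighborSet v).ncard = d}

/-- Adjacency in the auxiliary graph `𝒢_ℓ(v)`: the `2k+1` vertices `u 0 = v, u 1, …, u k,
u' 1, …, u' k` are all distinct and there exist `0 ≤ i, j ≤ k-1` such that the pair
`(u ℓ, u' ℓ)` is `(i,j)`-rich (symmetrised so that this defines a graph). -/
def AuxAdj (G : SimpleGraph V) (k h : ℕ) (K δ : ℝ) (ℓ : Fin (k + 1))
    (u u' : Fin (k + 1) → V) : Prop :=
  Function.Injective u ∧ Function.Injective u' ∧
  (∀ a b : Fin (k + 1), a ≠ 0 → b ≠ 0 → u a ≠ u' b) ∧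
  ∃ i j : ℕ, i < k ∧ j < k ∧
    (Rich G k h K δ i j (u ℓ) (u' ℓ) ∨ Rich G k h K δ i j (u' ℓ) (u ℓ))

/-- `r` satisfies the `k`-colour Ramsey property for `t`: every `k`-colouring of the edges of
the complete graph on `r` vertices contains a monochromatic complete graph on `t` vertices. -/
def RamseyProp (k t r : ℕ) : Prop :=
  ∀ χ : Fin r → Fin r → Fin k, (∀ a b, χ a b = χ b a) →
    ∃ (col : Fin k) (s : Finset (Fin r)), s.card = t ∧
      ∀ a ∈ s, ∀ b ∈ s, a ≠ b → χ a b = col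

open Finset

theorem Set.ncard_le_mul_ncard_of_mapsTo {α β : Type*} {s : Set α} {t : Set β} {f : α → β}
    (hf : Set.MapsTo f s t) (ht : t.Finite) (n : ℕ)
    (hn : ∀ b ∈ t, {a ∈ s | f a = b}.ncard ≤ n) : s.ncard ≤ n * t.ncard := by
  have hs : s = ⋃ b ∈ ht.toFinset, {a ∈ s | f a = b} := by
    ext a
    simpa using fun ha => hf ha
  calc s.ncard = (⋃ b ∈ ht.toFinset, {a ∈ s | f a = b}).ncard := congrArg _ hs
    _ ≤ ∑ b ∈ ht.toFinset, {a ∈ s | f a = b}.ncard := set_ncard_biUnion_le _ _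
    _ ≤ ht.toFinset.card • n := sum_le_card_nsmul _ _ _ fun b hb => hn b (by simpa using hb)
    _ = n * t.ncard := by rw [smul_eq_mul, mul_comm, Set.ncard_eq_toFinset_card t ht]

theorem Finset.set_ncard_biUnion_le_card_mul {ι α : Type*} (T : Finset ι) (f : ι → Set α) (n : ℕ)
    (hf : ∀ q ∈ T, (f q).ncard ≤ n) : (⋃ q ∈ T, f q).ncard ≤ #T * n :=
  (set_ncard_biUnion_le T f).trans ((sum_le_card_nsmul T _ _ hf).trans_eq (smul_eq_mul _ _))

section Walks

variable {V : Type*}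

theorem PadSeq.ext {ℓ : ℕ} {p q : ℕ → V} (hp : PadSeq ℓ p) (hq : PadSeq ℓ q)
    (h : ∀ n ≤ ℓ, p n = q n) : p = q := by
  funext n
  rcases le_total n ℓ with hn | hn
  · exact h n hn
  · rw [hp n hn, hq n hn, h ℓ le_rfl]

theorem finite_setOf_padSeq [Finite V] (ℓ : ℕ) : {p : ℕ → V | PadSeq ℓ p}.Finite :=
  Set.Finite.of_finite_image (f := fun p (n : Fin (ℓ + 1)) => p n) (Set.toFinite _)
    fun _ hp _ hq hpq => hp.ext hq fun n hn => congrFun hpq ⟨n, Nat.lt_succ_of_le hn⟩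

def truncSeq (ℓ : ℕ) (p : ℕ → V) : ℕ → V := fun n => p (min n ℓ)

theorem truncSeq_of_le {ℓ n : ℕ} (p : ℕ → V) (hn : n ≤ ℓ) : truncSeq ℓ p n = p n := by
  simp [truncSeq, hn]

theorem padSeq_truncSeq (ℓ : ℕ) (p : ℕ → V) : PadSeq ℓ (truncSeq ℓ p) := fun n hn => by
  simp [truncSeq, hn]

theorem PadSeq.eq_of_truncSeq_eq {ℓ : ℕ} {p q : ℕ → V} (hp : PadSeq (ℓ + 1) p)
    (hq : PadSeq (ℓ + 1) q) (htrunc : truncSeq ℓ p = truncSeq ℓ q) (hlast : p (ℓ + 1) = q (ℓ + 1)) :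
    p = q := by
  refine hp.ext hq fun n hn => ?_
  rcases Nat.lt_or_eq_of_le hn with hn | rfl
  · rw [← truncSeq_of_le p (Nat.lt_succ_iff.mp hn), ← truncSeq_of_le q (Nat.lt_succ_iff.mp hn),
      htrunc]
  · exact hlast

variable (G : SimpleGraph V)

def walksFrom (x : V) (ℓ : ℕ) : Set (ℕ → V) :=
  {p | p 0 = x ∧ PadSeq ℓ p ∧ ∀ n < ℓ, G.Adj (p n) (p (n + 1))}

theorem walksFrom_finite [Finite V] (x : V) (ℓ : ℕ) : (walksFrom G x ℓ).Finite :=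
  (finite_setOf_padSeq ℓ).subset fun _ hp => hp.2.1

variable {G}

theorem truncSeq_mem_walksFrom {x : V} {ℓ ℓ' : ℕ} {p : ℕ → V} (hp : p ∈ walksFrom G x ℓ')
    (hℓ : ℓ ≤ ℓ') : truncSeq ℓ p ∈ walksFrom G x ℓ := by
  refine ⟨by simpa [truncSeq] using hp.1, padSeq_truncSeq ℓ p, fun n hn => ?_⟩
  rw [truncSeq_of_le p hn.le, truncSeq_of_le p hn]
  exact hp.2.2 n (by omega)

variable [Finite V] {d : ℕ}

theorem ncard_le_mul_ncard_image_truncSeq (hdeg : ∀ v, (G.neighborSet v).ncard ≤ d) {x : V}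
    {ℓ : ℕ} {S : Set (ℕ → V)} (hS : S ⊆ walksFrom G x (ℓ + 1)) :
    S.ncard ≤ d * (truncSeq ℓ '' S).ncard := by
  refine Set.ncard_le_mul_ncard_of_mapsTo (Set.mapsTo_image _ _)
    ((walksFrom_finite G x ℓ).subset ?_) d fun q _ => ?_
  · rintro _ ⟨p, hp, rfl⟩
    exact truncSeq_mem_walksFrom (hS hp) (Nat.le_succ ℓ)
  · -- a walk is determined by its truncation and its last vertex, a neighbour of `q ℓ`
    refine (Set.ncard_le_ncard_of_injOn (fun p => p (ℓ + 1)) ?_ ?_).trans (hdeg (q ℓ))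
    · rintro p ⟨hp, rfl⟩
      simpa [truncSeq] using (hS hp).2.2 ℓ (Nat.lt_succ_self ℓ)
    · rintro p ⟨hp, hpq⟩ p' ⟨hp', hpq'⟩ hlast
      exact (hS hp).2.1.eq_of_truncSeq_eq (hS hp').2.1 (hpq.trans hpq'.symm) hlast

theorem ncard_walksFrom_le (hdeg : ∀ v, (G.neighborSet v).ncard ≤ d) (x : V) (ℓ : ℕ) :
    (walksFrom G x ℓ).ncard ≤ d ^ ℓ := by
  induction ℓ with
  | zero =>
    refine (Set.ncard_le_ncard (t := {fun _ => x}) fun p hp => ?_).trans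
      (Set.ncard_singleton _).le
    exact hp.2.1.ext (fun _ _ => rfl) fun n hn => by simpa [Nat.le_zero.mp hn] using hp.1
  | succ ℓ ih =>
    calc (walksFrom G x (ℓ + 1)).ncard
        ≤ d * (truncSeq ℓ '' walksFrom G x (ℓ + 1)).ncard :=
          ncard_le_mul_ncard_image_truncSeq hdeg le_rfl
      _ ≤ d * d ^ ℓ := by
          gcongr
          refine (Set.ncard_le_ncard ?_ (walksFrom_finite G x ℓ)).trans ih
          rintro _ ⟨p, hp, rfl⟩
          exact truncSeq_mem_walksFrom hp (Nat.le_succ ℓ)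
      _ = d ^ (ℓ + 1) := by ring

theorem ncard_walksFrom_apply_eq_le (hdeg : ∀ v, (G.neighborSet v).ncard ≤ d) (x w : V)
    {ℓ s : ℕ} (hs : 0 < s) (hsℓ : s ≤ ℓ) :
    {p ∈ walksFrom G x ℓ | p s = w}.ncard ≤ d ^ (ℓ - 1) := by
  induction ℓ with
  | zero => omega
  | succ ℓ ih =>
    rcases Nat.lt_or_eq_of_le hsℓ with hsℓ | rfl
    · calc {p ∈ walksFrom G x (ℓ + 1) | p s = w}.ncard
          ≤ d * (truncSeq ℓ '' {p ∈ walksFrom G x (ℓ + 1) | p s = w}).ncard :=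
            ncard_le_mul_ncard_image_truncSeq hdeg fun p hp => hp.1
        _ ≤ d * d ^ (ℓ - 1) := by
            gcongr
            refine (Set.ncard_le_ncard ?_ ((walksFrom_finite G x ℓ).sep _)).trans
              (ih (Nat.lt_succ_iff.mp hsℓ))
            rintro _ ⟨p, hp, rfl⟩
            exact ⟨truncSeq_mem_walksFrom hp.1 (Nat.le_succ ℓ),
              by rw [truncSeq_of_le p (by omega), hp.2]⟩
        _ = d ^ (ℓ + 1 - 1) := by rw [← pow_succ']; congr 1; omega
    · -- the last vertex is fixed, so truncation is injective
      refine (Set.ncard_le_ncard_of_injOn (truncSeq ℓ) (fun p hp => truncSeq_mem_walksFrom hp.1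
        (Nat.le_succ ℓ)) ?_ (walksFrom_finite G x ℓ)).trans (ncard_walksFrom_le hdeg x ℓ)
      rintro p ⟨hp, hpw⟩ p' ⟨hp', hpw'⟩ hpp'
      exact hp.2.1.eq_of_truncSeq_eq hp'.2.1 hpp' (hpw.trans hpw'.symm)

theorem ncard_walkPairs_fst_apply_eq_le (hdeg : ∀ v, (G.neighborSet v).ncard ≤ d)
    (x y w : V) {i j s : ℕ} (hs : 0 < s) (hsi : s ≤ i) :
    {PQ ∈ walksFrom G x i ×ˢ walksFrom G y j | PQ.1 s = w}.ncard ≤ d ^ (i + j - 1) := by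
  have hprod : {PQ ∈ walksFrom G x i ×ˢ walksFrom G y j | PQ.1 s = w} =
      {P ∈ walksFrom G x i | P s = w} ×ˢ walksFrom G y j := by
    ext PQ
    simp only [Set.mem_ofPred_eq, Set.mem_prod]
    tauto
  calc _ = {P ∈ walksFrom G x i | P s = w}.ncard * (walksFrom G y j).ncard := by
        rw [hprod, Set.ncard_prod]
    _ ≤ d ^ (i - 1) * d ^ j := Nat.mul_le_mul (ncard_walksFrom_apply_eq_le hdeg x w hs hsi)
        (ncard_walksFrom_le hdeg y j)
    _ = d ^ (i + j - 1) := by rw [← pow_add]; congr 1; omega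

theorem ncard_walkPairs_snd_apply_eq_le (hdeg : ∀ v, (G.neighborSet v).ncard ≤ d)
    (x y : V) (g : (ℕ → V) → V) {i j s : ℕ} (hs : 0 < s) (hsj : s ≤ j) :
    {PQ ∈ walksFrom G x i ×ˢ walksFrom G y j | PQ.2 s = g PQ.1}.ncard ≤ d ^ (i + j - 1) := by
  calc _ ≤ d ^ (j - 1) * (walksFrom G x i).ncard := by
        refine Set.ncard_le_mul_ncard_of_mapsTo (fun PQ hPQ => hPQ.1.1) (walksFrom_finite G x i)
          _ fun P _ => ?_
        refine (Set.ncard_le_ncard_of_injOn Prod.snd ?_ ?_ ((walksFrom_finite G y j).sep _)).trans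
          (ncard_walksFrom_apply_eq_le hdeg y (g P) hs hsj)
        · rintro _ ⟨⟨⟨-, hQ⟩, hQs⟩, rfl⟩
          exact ⟨hQ, hQs⟩
        · rintro ⟨P₁, Q₁⟩ ⟨-, rfl⟩ ⟨P₂, Q₂⟩ ⟨-, rfl⟩ (rfl : Q₁ = Q₂)
          rfl
    _ ≤ d ^ (j - 1) * d ^ i := Nat.mul_le_mul_left _ (ncard_walksFrom_le hdeg x i)
    _ = d ^ (i + j - 1) := by rw [← pow_add]; congr 1; omega

end Walks

section Rich

variable {V : Type*} (G : SimpleGraph V)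

/-- The pairs of arms counted in `Rich`. -/
def richArmPairs (k h i j : ℕ) (x y : V) : Set ((ℕ → V) × (ℕ → V)) :=
  {PQ | PathSeq G i PQ.1 ∧ PQ.1 0 = x ∧ PadSeq i PQ.1 ∧
    PathSeq G j PQ.2 ∧ PQ.2 0 = y ∧ PadSeq j PQ.2 ∧
    ManyDisjointPaths G (2 * k - i - j) (PQ.1 i) (PQ.2 j) ((h + 2) * (2 * k + 1) + 1)}

/-- Pairs of walks in which `P` meets `U` after its start, `Q` meets `U` after its start, or `Q`
meets `P` after its start. -/
def badArmPairs (x y : V) (i j : ℕ) (U : Finset V) : Set ((ℕ → V) × (ℕ → V)) :=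
  (⋃ q ∈ Icc 1 i ×ˢ U, {PQ ∈ walksFrom G x i ×ˢ walksFrom G y j | PQ.1 q.1 = q.2}) ∪
  (⋃ q ∈ Icc 1 j ×ˢ U, {PQ ∈ walksFrom G x i ×ˢ walksFrom G y j | PQ.2 q.1 = q.2}) ∪
  (⋃ q ∈ range (i + 1) ×ˢ Icc 1 j,
    {PQ ∈ walksFrom G x i ×ˢ walksFrom G y j | PQ.2 q.2 = PQ.1 q.1})

variable {G}

theorem badArmPairs_subset (x y : V) (i j : ℕ) (U : Finset V) :
    badArmPairs G x y i j U ⊆ walksFrom G x i ×ˢ walksFrom G y j := by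
  intro PQ hPQ
  simp only [badArmPairs, Set.mem_union, Set.mem_iUnion] at hPQ
  obtain ((⟨_, _, h, -⟩ | ⟨_, _, h, -⟩) | ⟨_, _, h, -⟩) := hPQ <;> exact h

variable [Finite V]

theorem ncard_badArmPairs_le {d : ℕ} (hdeg : ∀ v, (G.neighborSet v).ncard ≤ d) (x y : V)
    (i j : ℕ) (U : Finset V) :
    (badArmPairs G x y i j U).ncard ≤ (i * #U + j * #U + (i + 1) * j) * d ^ (i + j - 1) := by
  have h₁ := Finset.set_ncard_biUnion_le_card_mul (Icc 1 i ×ˢ U)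
    (fun q => {PQ ∈ walksFrom G x i ×ˢ walksFrom G y j | PQ.1 q.1 = q.2}) (d ^ (i + j - 1))
    fun q hq => by
      simp only [mem_product, mem_Icc] at hq
      exact ncard_walkPairs_fst_apply_eq_le hdeg x y q.2 hq.1.1 hq.1.2
  have h₂ := Finset.set_ncard_biUnion_le_card_mul (Icc 1 j ×ˢ U)
    (fun q => {PQ ∈ walksFrom G x i ×ˢ walksFrom G y j | PQ.2 q.1 = q.2}) (d ^ (i + j - 1))
    fun q hq => by
      simp only [mem_product, mem_Icc] at hq
      exact ncard_walkPairs_snd_apply_eq_le hdeg x y (fun _ => q.2) hq.1.1 hq.1.2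
  have h₃ := Finset.set_ncard_biUnion_le_card_mul (range (i + 1) ×ˢ Icc 1 j)
    (fun q => {PQ ∈ walksFrom G x i ×ˢ walksFrom G y j | PQ.2 q.2 = PQ.1 q.1}) (d ^ (i + j - 1))
    fun q hq => by
      simp only [mem_product, mem_Icc] at hq
      exact ncard_walkPairs_snd_apply_eq_le hdeg x y (· q.1) hq.2.1 hq.2.2
  simp only [card_product, Nat.card_Icc, card_range, Nat.add_sub_cancel] at h₁ h₂ h₃
  calc (badArmPairs G x y i j U).ncard
      ≤ _ := (Set.ncard_union_le _ _).trans (Nat.add_le_add_right (Set.ncard_union_le _ _) _)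
    _ ≤ _ := Nat.add_le_add (Nat.add_le_add h₁ h₂) h₃
    _ = _ := by ring

theorem ncard_badArmPairs_le_richThreshold {k h i j : ℕ} {K δ : ℝ}
    (hdeg : ∀ v, ((G.neighborSet v).ncard : ℝ) ≤ K * δ) (x y : V) {U : Finset V} (hU : #U ≤ h) :
    ((badArmPairs G x y i j U).ncard : ℝ) ≤
      ((2 * (i + j) * h * (2 * k + 1) + 2 * (i + 1) * j : ℕ) : ℝ) *
        (K * δ) ^ ((i : ℤ) + (j : ℤ) - 1) := by
  -- the degrees are integers, so the count can be done with `⌊K δ⌋₊` in place of `K δ`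
  have hd : (⌊K * δ⌋₊ : ℝ) ≤ K * δ := Nat.floor_le ((Nat.cast_nonneg _).trans (hdeg x))
  have hbad := ncard_badArmPairs_le (fun v => Nat.le_floor (hdeg v)) x y i j U
  rcases Nat.eq_zero_or_pos (i + j) with hij | hij
  · obtain ⟨rfl, rfl⟩ : i = 0 ∧ j = 0 := by omega
    simpa using hbad
  rw [show (i : ℤ) + j - 1 = ((i + j - 1 : ℕ) : ℤ) by omega, zpow_natCast]
  refine (Nat.cast_le.mpr hbad).trans ?_
  have hc : i * #U + j * #U + (i + 1) * j ≤ 2 * (i + j) * h * (2 * k + 1) + 2 * (i + 1) * j := by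
    calc _ = (i + j) * #U * 1 + (i + 1) * j * 1 := by ring
      _ ≤ (i + j) * h * (2 * (2 * k + 1)) + (i + 1) * j * 2 := by gcongr <;> omega
      _ = _ := by ring
  rw [Nat.cast_mul, Nat.cast_pow]
  exact mul_le_mul (Nat.cast_le.mpr hc) (pow_le_pow_left₀ (Nat.cast_nonneg _) hd _)
    (by positivity) (Nat.cast_nonneg _)

theorem Rich.exists_avoiding_pair {k h i j : ℕ} {K δ : ℝ}
    (hdeg : ∀ v, ((G.neighborSet v).ncard : ℝ) ≤ K * δ) {x y : V} {U : Finset V}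
    (hU : #U ≤ h) (hrich : Rich G k h K δ i j x y) :
    ∃ P Q : ℕ → V, PathSeq G i P ∧ P 0 = x ∧ PathSeq G j Q ∧ Q 0 = y ∧
      ManyDisjointPaths G (2 * k - i - j) (P i) (Q j) ((h + 2) * (2 * k + 1) + 1) ∧
      (∀ s, 0 < s → s ≤ i → P s ∉ U) ∧ (∀ s, 0 < s → s ≤ j → Q s ∉ U) ∧
      ∀ s ≤ i, ∀ s', 0 < s' → s' ≤ j → P s ≠ Q s' := by
  have hlt : (badArmPairs G x y i j U).ncard < (richArmPairs G k h i j x y).ncard :=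
    Nat.cast_lt.mp ((ncard_badArmPairs_le_richThreshold hdeg x y hU).trans_lt hrich.2)
  obtain ⟨⟨P, Q⟩, ⟨hP, hP0, hPpad, hQ, hQ0, hQpad, hPQ⟩, hgood⟩ :=
    Set.exists_mem_notMem_of_ncard_lt_ncard hlt
      (((walksFrom_finite G x i).prod (walksFrom_finite G y j)).subset (badArmPairs_subset ..))
  have hW : (P, Q) ∈ walksFrom G x i ×ˢ walksFrom G y j :=
    ⟨⟨hP0, hPpad, hP.1⟩, ⟨hQ0, hQpad, hQ.1⟩⟩
  refine ⟨P, Q, hP, hP0, hQ, hQ0, hPQ, fun s hs hsi hsU => hgood ?_,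
    fun s hs hsj hsU => hgood ?_, fun s hsi s' hs' hs'j heq => hgood ?_⟩
  · exact Or.inl (Or.inl (Set.mem_biUnion (x := (s, P s)) (by simp [*]; omega) ⟨hW, rfl⟩))
  · exact Or.inl (Or.inr (Set.mem_biUnion (x := (s, Q s)) (by simp [*]; omega) ⟨hW, rfl⟩))
  · exact Or.inr (Set.mem_biUnion (x := (s, s')) (by simp [*]; omega) ⟨hW, heq.symm⟩)

end Rich

section Paths

variable {V : Type*} {G : SimpleGraph V}

theorem PathSeq.reverse {ℓ : ℕ} {p : ℕ → V} (hp : PathSeq G ℓ p) :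
    PathSeq G ℓ (fun n => p (ℓ - n)) := by
  refine ⟨fun n hn => ?_, fun n n' hnn' hn' => (hp.2 (ℓ - n') (ℓ - n) (by omega) (by omega)).symm⟩
  have hadj := (hp.1 (ℓ - (n + 1)) (by omega)).symm
  rwa [show ℓ - (n + 1) + 1 = ℓ - n by omega] at hadj

def seqAppend (a : ℕ) (p q : ℕ → V) : ℕ → V := fun n => if n ≤ a then p n else q (n - a)

theorem seqAppend_of_le {a n : ℕ} (p q : ℕ → V) (hn : n ≤ a) : seqAppend a p q n = p n :=
  if_pos hn

theorem seqAppend_of_lt {a n : ℕ} (p q : ℕ → V) (hn : a < n) : seqAppend a p q n = q (n - a) :=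
  if_neg (Nat.not_le.mpr hn)

theorem seqAppend_of_ge {a n : ℕ} {p q : ℕ → V} (hpq : p a = q 0) (hn : a ≤ n) :
    seqAppend a p q n = q (n - a) := by
  rcases Nat.lt_or_eq_of_le hn with hn | rfl
  · exact seqAppend_of_lt p q hn
  · rw [seqAppend_of_le p q le_rfl, hpq, Nat.sub_self]

theorem PathSeq.append {a b : ℕ} {p q : ℕ → V} (hp : PathSeq G a p) (hq : PathSeq G b q)
    (hpq : p a = q 0) (hdisj : ∀ s ≤ a, ∀ s', 0 < s' → s' ≤ b → p s ≠ q s') :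
    PathSeq G (a + b) (seqAppend a p q) := by
  constructor
  · intro n hn
    rcases Nat.lt_or_ge n a with hna | hna
    · rw [seqAppend_of_le p q hna.le, seqAppend_of_le p q hna]
      exact hp.1 n hna
    · rw [seqAppend_of_ge hpq hna, seqAppend_of_lt p q (by omega),
        show n + 1 - a = n - a + 1 by omega]
      exact hq.1 (n - a) (by omega)
  · intro n n' hnn' hn'
    by_cases hn'a : n' ≤ a
    · rw [seqAppend_of_le p q (by omega), seqAppend_of_le p q hn'a]
      exact hp.2 n n' hnn' hn'a
    rw [seqAppend_of_lt p q (Nat.lt_of_not_le hn'a)]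
    by_cases hna : n ≤ a
    · rw [seqAppend_of_le p q hna]
      exact hdisj n hna (n' - a) (by omega) (by omega)
    · rw [seqAppend_of_lt p q (Nat.lt_of_not_le hna)]
      exact hq.2 (n - a) (n' - a) (by omega) (by omega)

variable (G)

def HasPathAvoiding (ℓ : ℕ) (U : Finset V) (x y : V) : Prop :=
  ∃ p : ℕ → V, PathSeq G ℓ p ∧ p 0 = x ∧ p ℓ = y ∧ ∀ n, 0 < n → n < ℓ → p n ∉ U

variable {G}

theorem HasPathAvoiding.symm {ℓ : ℕ} {U : Finset V} {x y : V} (h : HasPathAvoiding G ℓ U x y) :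
    HasPathAvoiding G ℓ U y x := by
  obtain ⟨p, hp, hp0, hpℓ, hpU⟩ := h
  exact ⟨_, hp.reverse, by simpa using hpℓ, by simpa using hp0,
    fun n hn hnℓ => hpU (ℓ - n) (by omega) (by omega)⟩

theorem ManyDisjointPaths.hasPathAvoiding {L N : ℕ} {u w : V}
    (hmany : ManyDisjointPaths G L u w N) {F : Finset V} (hF : #F < N) :
    HasPathAvoiding G L F u w := by
  obtain ⟨P, hP, -, hdisj⟩ := hmany
  by_contra hcon
  -- otherwise each path has an interior vertex in `F`, and these vertices are distinct
  have hhit : ∀ a, ∃ n, 0 < n ∧ n < L ∧ P a n ∈ F := fun a => by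
    by_contra! h
    exact hcon ⟨P a, (hP a).1, (hP a).2.1, (hP a).2.2, h⟩
  choose n hn0 hnL hnF using hhit
  have hinj : Set.InjOn (fun a => P a (n a)) (univ : Finset (Fin N)) := fun a _ b _ hab => by
    by_contra hne
    exact hdisj a b hne _ _ (hn0 a) (hnL a) (hn0 b) (hnL b) hab
  have := card_le_card_of_injOn _ (fun a _ => hnF a) hinj
  simp only [card_univ, Fintype.card_fin] at this
  omega

theorem hasPathAvoiding_seqAppend {i j L : ℕ} {P M Q : ℕ → V} {U : Finset V}
    (hP : PathSeq G i P) (hM : PathSeq G L M) (hQ : PathSeq G j Q) (hM0 : M 0 = P i)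
    (hML : M L = Q j) (hPU : ∀ s, 0 < s → s ≤ i → P s ∉ U) (hMU : ∀ n, 0 < n → n < L → M n ∉ U)
    (hQU : ∀ s, 0 < s → s ≤ j → Q s ∉ U) (hPQ : ∀ s ≤ i, ∀ s' ≤ j, P s ≠ Q s')
    (hMP : ∀ n, 0 < n → n < L → ∀ s ≤ i, M n ≠ P s)
    (hMQ : ∀ n, 0 < n → n < L → ∀ s ≤ j, M n ≠ Q s) :
    HasPathAvoiding G (i + L + j) U (P 0) (Q 0) := by
  have hPM : PathSeq G (i + L) (seqAppend i P M) := hP.append hM hM0.symm fun s hs n hn hnL => by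
    rcases Nat.lt_or_eq_of_le hnL with hnL | rfl
    · exact (hMP n hn hnL s hs).symm
    · rw [hML]
      exact hPQ s hs j le_rfl
  have hjoin : seqAppend i P M (i + L) = Q (j - 0) := by
    rw [seqAppend_of_ge hM0.symm (by omega), Nat.add_sub_cancel_left, hML, Nat.sub_zero]
  have hPMQ := hPM.append hQ.reverse hjoin fun n hn s hs hsj => by
    by_cases hni : n ≤ i
    · rw [seqAppend_of_le P M hni]
      exact hPQ n hni _ (by omega)
    rw [seqAppend_of_lt P M (by omega)]
    rcases Nat.lt_or_eq_of_le (show n - i ≤ L by omega) with h | h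
    · exact hMQ _ (by omega) h _ (by omega)
    · rw [h, hML]
      exact fun heq => hQ.2 (j - s) j (by omega) le_rfl heq.symm
  refine ⟨_, hPMQ, ?_, ?_, fun n hn hnlen => ?_⟩
  · rw [seqAppend_of_le _ _ (Nat.zero_le _), seqAppend_of_le _ _ (Nat.zero_le _)]
  · rw [seqAppend_of_ge hjoin (Nat.le_add_right _ _)]
    simp
  by_cases hnIL : n ≤ i + L
  · rw [seqAppend_of_le _ _ hnIL]
    by_cases hni : n ≤ i
    · rw [seqAppend_of_le P M hni]
      exact hPU n hn hni
    rw [seqAppend_of_lt P M (by omega)]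
    rcases Nat.lt_or_eq_of_le (show n - i ≤ L by omega) with h | h
    · exact hMU _ (by omega) h
    · rw [h, hML]
      exact hQU j (by omega) le_rfl
  · rw [seqAppend_of_lt _ _ (by omega)]
    exact hQU _ (by omega) (by omega)

theorem hasPathAvoiding_of_arms {i j L N : ℕ} {P Q : ℕ → V} {U : Finset V}
    (hP : PathSeq G i P) (hQ : PathSeq G j Q) (hPU : ∀ s, 0 < s → s ≤ i → P s ∉ U)
    (hQU : ∀ s, 0 < s → s ≤ j → Q s ∉ U) (hPQ : ∀ s ≤ i, ∀ s' ≤ j, P s ≠ Q s')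
    (hmany : ManyDisjointPaths G L (P i) (Q j) N) (hN : #U + (i + 1) + (j + 1) < N) :
    HasPathAvoiding G (i + L + j) U (P 0) (Q 0) := by
  classical
  set F := U ∪ (range (i + 1)).image P ∪ (range (j + 1)).image Q
  have hF : #F < N := by
    refine lt_of_le_of_lt ?_ hN
    refine (card_union_le _ _).trans (Nat.add_le_add ((card_union_le _ _).trans ?_) ?_)
    · exact Nat.add_le_add_left (card_image_le.trans (card_range _).le) _
    · exact card_image_le.trans (card_range _).le
  obtain ⟨M, hM, hM0, hML, hMF⟩ := hmany.hasPathAvoiding hF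
  refine hasPathAvoiding_seqAppend hP hM hQ hM0 hML hPU (fun n h₁ h₂ h => ?_) hQU hPQ
    (fun n h₁ h₂ s hs h => ?_) (fun n h₁ h₂ s hs h => ?_) <;> refine hMF n h₁ h₂ ?_
  · exact mem_union_left _ (mem_union_left _ h)
  · exact mem_union_left _ (mem_union_right _ (mem_image.mpr ⟨s, mem_range.mpr (by omega), h.symm⟩))
  · exact mem_union_right _ (mem_image.mpr ⟨s, mem_range.mpr (by omega), h.symm⟩)

theorem Rich.hasPathAvoiding [Finite V] {k h i j : ℕ} {K δ : ℝ}
    (hdeg : ∀ v, ((G.neighborSet v).ncard : ℝ) ≤ K * δ) (hi : i < k) (hj : j < k) {x y : V}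
    {U : Finset V} (hy : y ∈ U) (hU : #U ≤ h) (hrich : Rich G k h K δ i j x y) :
    HasPathAvoiding G (2 * k) U x y := by
  obtain ⟨P, Q, hP, rfl, hQ, rfl, hmany, hPU, hQU, hPQ⟩ := hrich.exists_avoiding_pair hdeg hU
  have hPQ' : ∀ s ≤ i, ∀ s' ≤ j, P s ≠ Q s' := by
    intro s hs s' hs'
    rcases Nat.eq_zero_or_pos s' with rfl | hs'0
    · rcases Nat.eq_zero_or_pos s with rfl | hs0
      · exact hrich.1
      · exact fun heq => hPU s hs0 hs (heq ▸ hy)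
    · exact hPQ s hs s' hs'0 hs'
  have := hasPathAvoiding_of_arms hP hQ hPU hQU hPQ' hmany (by nlinarith)
  rwa [show i + (2 * k - i - j) + j = 2 * k by omega] at this

end Paths

section Embedding

variable {V : Type*} {G : SimpleGraph V}

/-- Greedy construction: paths are chosen one at a time, each avoiding `U₀` and the interiors
of the paths chosen before it, which together never exceed `h` vertices. -/
theorem exists_internallyDisjoint_paths {ι : Type*} (T : Finset ι) {s h : ℕ} (U₀ : Finset V)
    (x y : ι → V) (hcard : #U₀ + (s - 1) * #T ≤ h)
    (hpath : ∀ e ∈ T, ∀ U : Finset V, U₀ ⊆ U → #U ≤ h → HasPathAvoiding G s U (x e) (y e)) :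
    ∃ ρ : ι → ℕ → V, (∀ e ∈ T, PathSeq G s (ρ e) ∧ ρ e 0 = x e ∧ ρ e s = y e) ∧
      (∀ e ∈ T, ∀ n, 0 < n → n < s → ρ e n ∉ U₀) ∧
      ∀ e ∈ T, ∀ e' ∈ T, e ≠ e' → ∀ n n', 0 < n → n < s → 0 < n' → n' < s → ρ e n ≠ ρ e' n' := by
  classical
  induction T using Finset.induction_on with
  | empty => exact ⟨fun e _ => x e, by simp, by simp, by simp⟩
  | insert e T he ih =>
    rw [card_insert_of_notMem he] at hcard
    obtain ⟨ρ, hρ, hρU₀, hρdisj⟩ := ih (le_trans (by gcongr; omega) hcard)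
      fun e' he' => hpath e' (mem_insert_of_mem he')
    set U := U₀ ∪ T.biUnion fun e' => (Ioo 0 s).image (ρ e')
    have hU : #U ≤ h := by
      refine (card_union_le _ _).trans (le_trans (Nat.add_le_add_left ?_ _) hcard)
      refine card_biUnion_le.trans ((sum_le_card_nsmul _ _ (s - 1) fun e' _ => ?_).trans ?_)
      · exact card_image_le.trans (by simp)
      · rw [smul_eq_mul, mul_comm]
        exact Nat.mul_le_mul_left _ (Nat.le_succ _)
    obtain ⟨q, hq, hq0, hqs, hqU⟩ := hpath e (mem_insert_self e T) U subset_union_left hU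
    have hqρ : ∀ e' ∈ T, ∀ n n', 0 < n → n < s → 0 < n' → n' < s → q n ≠ ρ e' n' :=
      fun e' he' n n' hn hns hn' hn's heq => hqU n hn hns (mem_union_right _ (mem_biUnion.mpr
        ⟨e', he', mem_image.mpr ⟨n', mem_Ioo.mpr ⟨hn', hn's⟩, heq.symm⟩⟩))
    have hupd : ∀ e' ∈ T, Function.update ρ e q e' = ρ e' := fun e' he' =>
      Function.update_of_ne (ne_of_mem_of_not_mem he' he) _ _
    refine ⟨Function.update ρ e q, ?_, ?_, ?_⟩
    · simp only [forall_mem_insert, Function.update_self]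
      exact ⟨⟨hq, hq0, hqs⟩, fun e' he' => hupd e' he' ▸ hρ e' he'⟩
    · simp only [forall_mem_insert, Function.update_self]
      exact ⟨fun n hn hns hnU => hqU n hn hns (mem_union_left _ hnU),
        fun e' he' => hupd e' he' ▸ hρU₀ e' he'⟩
    · simp only [forall_mem_insert, Function.update_self]
      refine ⟨⟨fun h => (h rfl).elim, fun e' he' _ => hupd e' he' ▸ hqρ e' he'⟩,
        fun e' he' => ⟨?_, ?_⟩⟩
      · exact fun _ n n' hn hns hn' hn's => hupd e' he' ▸ (hqρ e' he' n' n hn' hn's hn hns).symm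
      · exact fun e'' he'' hne => hupd e' he' ▸ hupd e'' he'' ▸ hρdisj e' he' e'' he'' hne

theorem containsMultiSubdiv_of_hasPathAvoiding {t s h : ℕ} {m : Fin t → Fin t → ℕ}
    {φ : Fin t → V} (hφ : Function.Injective φ)
    (hh : t + (s - 1) * ∑ p : Fin t × Fin t, (if p.1 < p.2 then m p.1 p.2 else 0) ≤ h)
    (hpath : ∀ a b, a < b → ∀ U : Finset V, (∀ c, φ c ∈ U) → #U ≤ h →
      HasPathAvoiding G s U (φ a) (φ b)) :
    ContainsMultiSubdiv G t m s := by
  classical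
  -- one slot `(a, b, c)` for each of the `m a b` parallel edges between `a < b`
  set T : Finset (Fin t × Fin t × ℕ) := univ.biUnion fun ab : Fin t × Fin t =>
    (range (if ab.1 < ab.2 then m ab.1 ab.2 else 0)).image fun c => (ab.1, ab.2, c)
  have hT : ∀ a b c, (a, b, c) ∈ T ↔ c < if a < b then m a b else 0 := by
    simp [T]
  have hTcard : #T ≤ ∑ p : Fin t × Fin t, (if p.1 < p.2 then m p.1 p.2 else 0) :=
    card_biUnion_le.trans (sum_le_sum fun _ _ => card_image_le.trans (card_range _).le)
  have hcard : #(univ.image φ) + (s - 1) * #T ≤ h := by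
    refine le_trans (Nat.add_le_add (card_image_le.trans ?_) (Nat.mul_le_mul_left _ hTcard)) hh
    simp
  obtain ⟨ρ, hρ, hρφ, hρdisj⟩ := exists_internallyDisjoint_paths T (univ.image φ)
    (fun e => φ e.1) (fun e => φ e.2.1) hcard fun ⟨a, b, c⟩ he U hU hUh => by
      have hab : a < b := by
        by_contra hab
        simp [hT, hab] at he
      exact hpath a b hab U (fun c => hU (mem_image_of_mem φ (mem_univ c))) hUh
  have hmem : ∀ a b, a < b → ∀ c : Fin (m a b), (a, b, (c : ℕ)) ∈ T := fun a b hab c =>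
    (hT a b c).mpr (by simp [hab])
  refine ⟨φ, fun a b c => ρ (a, b, c), hφ, fun a b hab c => hρ _ (hmem a b hab c),
    fun a b hab c n hn hns d hd =>
      hρφ _ (hmem a b hab c) n hn hns (mem_image.mpr ⟨d, mem_univ d, hd.symm⟩),
    fun a b hab a' b' hab' c c' hne => hρdisj _ (hmem a b hab c) _ (hmem a' b' hab' c') hne⟩

end Embedding

theorem RamseyProp.exists_monochromatic {k t r : ℕ} (hk : 0 < k) (hr : RamseyProp k t r)
    (P : Fin k → Fin r → Fin r → Prop) (hP : ∀ a b, a < b → ∃ col, P col a b) :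
    ∃ col, ∃ f : Fin t → Fin r, StrictMono f ∧ ∀ a b, a < b → P col (f a) (f b) := by
  classical
  choose χ hχ using hP
  -- the colour of `{a, b}` is read off the ordered pair; the diagonal colour is irrelevant
  let χ' : Fin r → Fin r → Fin k := fun a b =>
    if hab : a < b then χ a b hab else if hba : b < a then χ b a hba else ⟨0, hk⟩
  have hsymm : ∀ a b, χ' a b = χ' b a := by
    intro a b
    rcases lt_trichotomy a b with hab | rfl | hba
    · simp [χ', hab, hab.not_gt]
    · rfl
    · simp [χ', hba, hba.not_gt]
  obtain ⟨col, S, hS, hmono⟩ := hr χ' hsymm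
  set f := S.orderEmbOfFin hS
  refine ⟨col, f, f.strictMono, fun a b hab => ?_⟩
  have hlt : f a < f b := f.strictMono hab
  have hcol : χ' (f a) (f b) = col :=
    hmono _ (S.orderEmbOfFin_mem hS a) _ (S.orderEmbOfFin_mem hS b) hlt.ne
  rw [← hcol, show χ' (f a) (f b) = χ (f a) (f b) hlt from dif_pos hlt]
  exact hχ _ _ hlt

theorem aux_union_graph_is_clique_free_general
    {V : Type*} [Fintype V] (G : SimpleGraph V)
    (t k : ℕ) (hk : 1 ≤ k)
    (m : Fin t → Fin t → ℕ)
    (K δ : ℝ)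
    (hmax : ∀ v : V, ((G.neighborSet v).ncard : ℝ) ≤ K * δ)
    (hHfree : ¬ ContainsMultiSubdiv G t m (2 * k))
    (r : ℕ) (hr : RamseyProp k t r)
    (v : V) :
    ¬ ∃ c : Fin r → (Fin (k + 1) → V),
        Function.Injective c ∧
        (∀ a, c a 0 = v ∧ ∀ s : Fin k, G.Adj (c a s.castSucc) (c a s.succ)) ∧
        (∀ a b, a ≠ b → ∃ ℓ : Fin (k + 1), 1 ≤ (ℓ : ℕ) ∧
          AuxAdj G k (nH t k m) K δ ℓ (c a) (c b)) := by
  rintro ⟨c, -, -, hcadj⟩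
  obtain ⟨col, f, -, hf⟩ := hr.exists_monochromatic hk
    (fun col a b => AuxAdj G k (nH t k m) K δ col.succ (c a) (c b)) fun a b hab => by
      obtain ⟨ℓ, hℓ, hadj⟩ := hcadj a b hab.ne
      obtain ⟨col, rfl⟩ := Fin.exists_succ_eq.mpr (Fin.pos_iff_ne_zero.mp hℓ)
      exact ⟨col, hadj⟩
  -- the level-`col.succ` vertices of a monochromatic `t`-clique are the branch vertices
  refine hHfree (containsMultiSubdiv_of_hasPathAvoiding (φ := fun a => c (f a) col.succ)
    (Function.Injective.of_lt_imp_ne fun a b hab =>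
      (hf a b hab).2.2.1 _ _ (Fin.succ_ne_zero _) (Fin.succ_ne_zero _)) le_rfl ?_)
  intro a b hab U hU hUh
  obtain ⟨-, -, -, i, j, hi, hj, hrich⟩ := hf a b hab
  rcases hrich with hrich | hrich
  · exact hrich.hasPathAvoiding hmax hi hj (hU b) hUh
  · exact (hrich.hasPathAvoiding hmax hi hj (hU a) hUh).symm

/-- **Lemma 4.4, second part.** With the notation of the previous statement
and `r = R_k(t)` the `k`-colour Ramsey number, the union graph `𝒢(v) = ⋃_{1 ≤ ℓ ≤ k} 𝒢_ℓ(v)`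
contains no clique on `r` vertices. -/
theorem aux_union_graph_is_clique_free
    {V : Type*} [Fintype V] [DecidableEq V] (G : SimpleGraph V)
    (t k : ℕ) (hk : 1 ≤ k)
    (m : Fin t → Fin t → ℕ) (hsymm : ∀ a b, m a b = m b a) (hirr : ∀ a, m a a = 0)
    (K δ : ℝ) (hK : 0 < K) (hδ : 0 < δ)
    (hmax : ∀ v : V, ((G.neighborSet v).ncard : ℝ) ≤ K * δ)
    (hHfree : ¬ ContainsMultiSubdiv G t m (2 * k))
    (r : ℕ) (hr : RamseyProp k t r) (hrleast : ∀ r', RamseyProp k t r' → r ≤ r')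
    (v : V) :
    ¬ ∃ c : Fin r → (Fin (k + 1) → V),
        Function.Injective c ∧
        (∀ a, c a 0 = v ∧ ∀ s : Fin k, G.Adj (c a s.castSucc) (c a s.succ)) ∧
        (∀ a b, a ≠ b → ∃ ℓ : Fin (k + 1), 1 ≤ (ℓ : ℕ) ∧
          AuxAdj G k (nH t k m) K δ ℓ (c a) (c b)) :=
  aux_union_graph_is_clique_free_general G t k hk m K δ hmax hHfree r hr v
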